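/- arXiv:1108.5358 — 2 statements merged into one kernel-verified Lean document; each statement's English description precedes it below -/
import Mathlib

section
/- (Homotopy invariance of the Wilson line of a flat connection.) Let a, b : ℝ × ℝ → Matrix (Fin m) (Fin m) ℝ be continuously differentiable and satisfy the zero-curvature equation ∂_s a(t,s) − ∂_t b(t,s) = b(t,s)·a(t,s) − a(t,s)·b(t,s) for all (t,s), together with the fixed-endpoint condition b(0,s) = b(1,s) = 0 for all s. Let U : ℝ × ℝ → Matrix (Fin m) (Fin m) ℝ be twice continuously differentiable with ∂_t U(t,s) = a(t,s)·U(t,s) and U(0,s) = 1 for all s. Then ∂_s U(t,s) = b(t,s)·U(t,s) for all (t,s); in particular ∂_s U(1,s) = 0, so the Wilson line U(1,s) is independent of s: U(1,s) = U(1,0) for all s. -/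
/-!
Put `W = ∂ₛU − b·U`. Since `∂ₜ∂ₛU = ∂ₛ∂ₜU = ∂ₛ(a·U)`, the zero-curvature equation turns the
`t`-derivative of `W` into `∂ₜW = a·W`, and `W(0,s) = 0` because `U(0,·) ≡ 1` and `b(0,·) = 0`.
Uniqueness for this linear ODE forces `W ≡ 0`, i.e. `∂ₛU = b·U`, which vanishes at `t = 1`
because `b(1,·) = 0`.
-/

attribute [local instance] Matrix.normedAddCommGroup Matrix.normedSpace

open Set

namespace Matrix

variable {𝕜 : Type*} [NontriviallyNormedField 𝕜] [CompleteSpace 𝕜]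
  {l m n : Type*} [Fintype l] [Fintype m] [Fintype n]

noncomputable def mulCLM : Matrix l m 𝕜 →L[𝕜] Matrix m n 𝕜 →L[𝕜] Matrix l n 𝕜 :=
  LinearMap.toContinuousLinearMap
    (LinearMap.toContinuousLinearMap.toLinearMap ∘ₗ mulLinearMap 𝕜)

end Matrix

theorem HasDerivAt.matrix_mul {𝕜 : Type*} [NontriviallyNormedField 𝕜] [CompleteSpace 𝕜]
    {l m n : Type*} [Fintype l] [Fintype m] [Fintype n]
    {f : 𝕜 → Matrix l m 𝕜} {g : 𝕜 → Matrix m n 𝕜} {f' : Matrix l m 𝕜} {g' : Matrix m n 𝕜}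
    {x : 𝕜}
    (hf : HasDerivAt f f' x) (hg : HasDerivAt g g' x) :
    HasDerivAt (fun y => f y * g y) (f x * g' + f' * g x) x :=
  Matrix.mulCLM.hasDerivAt_of_bilinear (fun _ => hf) (fun _ => hg)

section

variable {E : Type*} [NormedAddCommGroup E] [NormedSpace ℝ E]

theorem ODE_solution_eq_zero_of_linear {A : ℝ → E →L[ℝ] E} (hA : Continuous A) {W : ℝ → E}
    {t₀ : ℝ} (hW : ∀ t, HasDerivAt W (A t (W t)) t) (hW₀ : W t₀ = 0) (t : ℝ) : W t = 0 := by
  set T := |t - t₀| + 1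
  obtain ⟨C, hC⟩ := (isCompact_Icc (a := t₀ - T) (b := t₀ + T)).exists_bound_of_continuousOn
    hA.continuousOn
  have hlip : ∀ x ∈ Ioo (t₀ - T) (t₀ + T), LipschitzOnWith C.toNNReal (A x) univ := fun x hx =>
    ((A x).lipschitz.weaken (by
      simpa only [norm_toNNReal] using
        Real.toNNReal_le_toNNReal (hC x (Ioo_subset_Icc_self hx)))).lipschitzOnWith
  have hT : 0 < T := by positivity
  refine ODE_solution_unique_of_mem_Icc (g := 0) hlip ⟨by linarith, by linarith⟩
    (fun x _ => (hW x).continuousAt.continuousWithinAt) (fun x _ => hW x) (fun _ _ => mem_univ _)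
    continuousOn_const (fun x _ => by simp)
    (fun _ _ => mem_univ _) hW₀ ⟨?_, ?_⟩ <;> linarith [le_abs_self (t - t₀), neg_abs_le (t - t₀)]

theorem HasFDerivAt.hasDerivAt_slice_fst {U : ℝ × ℝ → E} {L : ℝ × ℝ →L[ℝ] E} {t s : ℝ}
    (hU : HasFDerivAt U L (t, s)) : HasDerivAt (fun t' => U (t', s)) (L (1, 0)) t :=
  hU.comp_hasDerivAt t ((hasDerivAt_id t).prodMk (hasDerivAt_const t s))

theorem HasFDerivAt.hasDerivAt_slice_snd {U : ℝ × ℝ → E} {L : ℝ × ℝ →L[ℝ] E} {t s : ℝ}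
    (hU : HasFDerivAt U L (t, s)) : HasDerivAt (fun s' => U (t, s')) (L (0, 1)) s :=
  hU.comp_hasDerivAt s ((hasDerivAt_const s t).prodMk (hasDerivAt_id s))

/-- Equality of mixed partials: `∂ₜ∂ₛU = ∂ₛ∂ₜU`. -/
theorem ContDiff.hasDerivAt_fderiv_slice_fst {U : ℝ × ℝ → E} (hU : ContDiff ℝ 2 U)
    {P : ℝ × ℝ → E} (hP : ∀ t s, HasDerivAt (fun t' => U (t', s)) (P (t, s)) t) {t s : ℝ}
    {P' : E} (hP' : HasDerivAt (fun s' => P (t, s')) P' s) :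
    HasDerivAt (fun t' => fderiv ℝ U (t', s) (0, 1)) P' t := by
  have hU' : Differentiable ℝ (fderiv ℝ U) :=
    (hU.fderiv_right (m := 1) (by norm_num)).differentiable one_ne_zero
  have hP_eq : ∀ s', P (t, s') = fderiv ℝ U (t, s') (1, 0) := fun s' =>
    (hP t s').unique ((hU.differentiable two_ne_zero _).hasFDerivAt.hasDerivAt_slice_fst)
  have h_snd :
      HasDerivAt (fun s' => P (t, s')) (fderiv ℝ (fderiv ℝ U) (t, s) (0, 1) (1, 0)) s := by
    simpa only [hP_eq, map_zero, add_zero] using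
      (hU' (t, s)).hasFDerivAt.hasDerivAt_slice_snd.clm_apply
        (hasDerivAt_const s ((1, 0) : ℝ × ℝ))
  have h_symm := (hU.contDiffAt (x := (t, s)).isSymmSndFDerivAt (by simp)).eq (1, 0) (0, 1)
  simpa only [map_zero, add_zero, h_symm, h_snd.unique hP'] using
    (hU' (t, s)).hasFDerivAt.hasDerivAt_slice_fst.clm_apply
      (hasDerivAt_const t ((0, 1) : ℝ × ℝ))

end

theorem hasDerivAt_fderiv_slice_snd_sub_mul {m : ℕ}
    {a b U : ℝ × ℝ → Matrix (Fin m) (Fin m) ℝ}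
    (ha : Differentiable ℝ a) (hb : Differentiable ℝ b)
    (hflat : ∀ t s : ℝ,
      deriv (fun s' => a (t, s')) s - deriv (fun t' => b (t', s)) t
        = b (t, s) * a (t, s) - a (t, s) * b (t, s))
    (hU : ContDiff ℝ 2 U)
    (hUode : ∀ t s : ℝ, HasDerivAt (fun t' => U (t', s)) (a (t, s) * U (t, s)) t) (t s : ℝ) :
    HasDerivAt (fun t' => fderiv ℝ U (t', s) (0, 1) - b (t', s) * U (t', s))
      (a (t, s) * (fderiv ℝ U (t, s) (0, 1) - b (t, s) * U (t, s))) t := by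
  have ha_s : HasDerivAt (fun s' => a (t, s')) (deriv (fun s' => a (t, s')) s) s :=
    (ha _).hasFDerivAt.hasDerivAt_slice_snd.differentiableAt.hasDerivAt
  have hb_t : HasDerivAt (fun t' => b (t', s)) (deriv (fun t' => b (t', s)) t) t :=
    (hb _).hasFDerivAt.hasDerivAt_slice_fst.differentiableAt.hasDerivAt
  have hU_s := (hU.differentiable two_ne_zero (t, s)).hasFDerivAt.hasDerivAt_slice_snd
  have hV_t := hU.hasDerivAt_fderiv_slice_fst (P := fun p => a p * U p) hUode (ha_s.matrix_mul hU_s)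
  refine (hV_t.sub (hb_t.matrix_mul (hUode t s))).congr_deriv ?_
  set V := fderiv ℝ U (t, s) (0, 1)
  -- `HasDerivAt.sub` subtracts in the normed group; restate with `Matrix`'s own operations
  show a (t, s) * V + deriv (fun s' => a (t, s')) s * U (t, s)
      - (b (t, s) * (a (t, s) * U (t, s)) + deriv (fun t' => b (t', s)) t * U (t, s))
    = a (t, s) * (V - b (t, s) * U (t, s))
  rw [sub_eq_iff_eq_add.mp (hflat t s)]
  noncomm_ring

/-- **Homotopy invariance of the Wilson line of a flat connection.**
`a(t,s)` and `b(t,s)` are the two components of the pullback of a flat matrix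
connection along a homotopy of paths with fixed endpoints: they satisfy the
zero-curvature equation `∂ₛa − ∂ₜb = b·a − a·b` and `b` vanishes at `t = 0, 1`.
If `U(·,s)` is the parallel transport, `∂ₜU = a·U`, `U(0,s) = 1`, then
`∂ₛU = b·U`; in particular `∂ₛU(1,s) = 0`, so the Wilson line `U(1,s)` is
independent of `s`. -/
theorem statement8 (m : ℕ)
    (a b U : ℝ × ℝ → Matrix (Fin m) (Fin m) ℝ)
    (ha : ContDiff ℝ 1 a) (hb : ContDiff ℝ 1 b)
    (hflat : ∀ t s : ℝ,
      deriv (fun s' => a (t, s')) s - deriv (fun t' => b (t', s)) t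
        = b (t, s) * a (t, s) - a (t, s) * b (t, s))
    (hend0 : ∀ s : ℝ, b (0, s) = 0) (hend1 : ∀ s : ℝ, b (1, s) = 0)
    (hUsmooth : ContDiff ℝ 2 U)
    (hUode : ∀ t s : ℝ, HasDerivAt (fun t' => U (t', s)) (a (t, s) * U (t, s)) t)
    (hUinit : ∀ s : ℝ, U (0, s) = 1) :
    (∀ t s : ℝ, HasDerivAt (fun s' => U (t, s')) (b (t, s) * U (t, s)) s)
    ∧ (∀ s : ℝ, deriv (fun s' => U (1, s')) s = 0)
    ∧ (∀ s : ℝ, U (1, s) = U (1, 0)) := by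
  have hU_s : ∀ t s, HasDerivAt (fun s' => U (t, s')) (fderiv ℝ U (t, s) (0, 1)) s := fun t s =>
    (hUsmooth.differentiable two_ne_zero (t, s)).hasFDerivAt.hasDerivAt_slice_snd
  have hdefect₀ : ∀ s, fderiv ℝ U (0, s) (0, 1) - b (0, s) * U (0, s) = 0 := fun s => by
    rw [hend0, zero_mul, sub_zero]
    exact (hU_s 0 s).unique (by simpa only [hUinit] using hasDerivAt_const s (1 : Matrix _ _ ℝ))
  have hdefect : ∀ t s, fderiv ℝ U (t, s) (0, 1) = b (t, s) * U (t, s) := fun t s =>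
    sub_eq_zero.mp <| ODE_solution_eq_zero_of_linear
      (A := fun t' => Matrix.mulCLM (n := Fin m) (a (t', s))) (by fun_prop)
      (fun t' => hasDerivAt_fderiv_slice_snd_sub_mul (ha.differentiable one_ne_zero)
        (hb.differentiable one_ne_zero) hflat hUsmooth hUode t' s) (hdefect₀ s) t
  have hU_s' : ∀ t s, HasDerivAt (fun s' => U (t, s')) (b (t, s) * U (t, s)) s := fun t s =>
    hdefect t s ▸ hU_s t s
  have hWilson : ∀ s, deriv (fun s' => U (1, s')) s = 0 := fun s =>
    (hU_s' 1 s).deriv.trans (by rw [hend1, zero_mul])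
  exact ⟨hU_s', hWilson, fun s =>
    is_const_of_deriv_eq_zero (fun s' => (hU_s' 1 s').differentiableAt) hWilson s 0⟩
end

section
/- (The Wilson loop is closed under the BRST differential.) Let R be a (not necessarily commutative) ring, I a finite type, d : I → ℤ a degree function, and δ : R → R an additive map. Let U, T : I → I → R satisfy: (i) for all α, β ∈ I, δ(U α β) = −Σ_{γ∈I} (T α γ)·(U γ β) + Σ_{γ∈I} (−1)^{d α + d γ} (U α γ)·(T γ β); and (ii) for all α, γ ∈ I, (T γ α)·(U α γ) = (U α γ)·(T γ α). Then the supertrace of U is δ-closed: δ( Σ_{α∈I} (−1)^{d α} U α α ) = 0. -/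
/-!
Write `s α = (-1) ^ d α`. Applying (i) on the diagonal, the supertrace of `δ U` is
`-∑ α γ, s α • T α γ * U γ α + ∑ α γ, s γ • U α γ * T γ α`, since `s α * s α = 1`.
By (ii) the second double sum is the first with the roles of `α` and `γ` exchanged:
it is the supertrace of `T U` computed as that of `U T`, which is legitimate although
`R` is not commutative because the entries that meet on the diagonal commute.
-/

open Finset

theorem Int.units_zpow_mul_zpow_add (u : ℤˣ) (a b : ℤ) :
    u ^ a * u ^ (a + b) = u ^ b := by
  rw [zpow_add, ← mul_assoc, Int.units_mul_self, one_mul]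

theorem Finset.sum_sum_smul_mul_comm_of_commute {S R I : Type*} [AddCommMonoid R] [Mul R]
    [SMul S R] [Fintype I] (c : I → S) (U T : I → I → R)
    (hUT : ∀ α γ, T γ α * U α γ = U α γ * T γ α) :
    ∑ α, ∑ γ, c γ • (U α γ * T γ α) = ∑ α, ∑ γ, c α • (T α γ * U γ α) := by
  rw [Finset.sum_comm]
  simp only [hUT]

/-- **The Wilson loop is closed under the BRST differential.**
`U α β` are the components of the Wilson line of a super-loop, `T` is the
normalized representation matrix, `δ` the BRST differential and `d α` the fibre
level of the coordinate indexed by `α`.  Given the computed BRST variation of the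
Wilson line (i) and the graded-commutation relation (ii), the supertrace of `U`
(the Wilson loop) is `δ`-closed. -/
theorem statement12 (R : Type*) [Ring R] (I : Type*) [Fintype I]
    (d : I → ℤ) (δ : R → R)
    (hδ : ∀ x y : R, δ (x + y) = δ x + δ y)
    (U T : I → I → R)
    (h1 : ∀ α β : I, δ (U α β) =
      -∑ γ : I, T α γ * U γ β
        + ∑ γ : I, (((-1 : ℤˣ) ^ (d α + d γ) : ℤˣ) : ℤ) • (U α γ * T γ β))
    (h2 : ∀ α γ : I, T γ α * U α γ = U α γ * T γ α) :
    δ (∑ α : I, (((-1 : ℤˣ) ^ (d α) : ℤˣ) : ℤ) • U α α) = 0 := by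
  let s : I → ℤ := fun α => ((-1 : ℤˣ) ^ (d α) : ℤˣ)
  have hsign : ∀ α γ (x : R), s α • ((((-1 : ℤˣ) ^ (d α + d γ) : ℤˣ) : ℤ) • x) = s γ • x := by
    intro α γ x
    rw [smul_smul, ← Units.val_mul, Int.units_zpow_mul_zpow_add]
  calc δ (∑ α, s α • U α α)
      = ∑ α, s α • δ (U α α) := by
        change AddMonoidHom.mk' δ hδ _ = ∑ α, s α • AddMonoidHom.mk' δ hδ _
        simp only [map_sum, map_zsmul]
    _ = -∑ α, ∑ γ, s α • (T α γ * U γ α) + ∑ α, ∑ γ, s γ • (U α γ * T γ α) := by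
        simp only [h1, smul_add, smul_neg, smul_sum, hsign, sum_add_distrib, sum_neg_distrib]
    _ = 0 := by
        rw [Finset.sum_sum_smul_mul_comm_of_commute s U T h2, neg_add_cancel]
end
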